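/- Let X be a finite nonempty set, β > 0, T > 0, and let A, B, Q be pairwise commuting hermitian operators on ℂ^X with B positive definite. Set f = (I + exp(−βQ − 2TB))^{−1} and define the Keldysh covariance blocks C_{ρσ}(t,t') for ρ,σ ∈ {+,−}, t,t' ∈ [0,T] by: C_{−+}(t,t') = exp(−itA) f exp(it'A) exp((−2T+t+t')B); C_{+−}(t,t') = −exp(−itA) f exp(−βQ) exp(it'A) exp(−(t+t')B); C_{++}(t,t') = 1_{t≥t'} exp(−itA) f exp(it'A) exp((t'−t)B) − 1_{t<t'} exp(−itA) f exp(−βQ) exp(it'A) exp((t'−t−2T)B); C_{−−}(t,t') = 1_{t≤t'} exp(−itA) f exp(it'A) exp((t−t')B) − 1_{t>t'} exp(−itA) f exp(−βQ) exp(it'A) exp((t−t'−2T)B). Let q̃ and b̃ be the smallest eigenvalues of Q and B, and let |X| denote the cardinality of X. Define the decay constant α_C = max{ sup_{ρ∈{+,−}, t∈[0,T], x∈X} ∑_{σ∈{+,−}} ∫₀^T ∑_{y∈X} |(C_{ρσ}(t,t'))_{x,y}| dt', sup_{σ∈{+,−}, t'∈[0,T], y∈X} ∑_{ρ∈{+,−}}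 ∫₀^T ∑_{x∈X} |(C_{ρσ}(t,t'))_{x,y}| dt } and the modified decay constant α̃_C = max{ sup_{σ∈{+,−}, t'∈[0,T], y∈X} ∑_{x∈X} |(C_{+σ}(T,t'))_{x,y}|, sup_{ρ∈{+,−}, t∈[0,T], x∈X} ∑_{y∈X} |(C_{ρ−}(t,T))_{x,y}| }. Then α_C ≤ 2 |X| (1 + e^{−βq̃}) (1/b̃)(1 − e^{−Tb̃}) and α̃_C ≤ |X| max{1, e^{−βq̃} e^{−Tb̃}}. -/

import Mathlib

open MeasureTheory
open scoped BigOperators Matrix ComplexOrder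

noncomputable section

/-- Matrix exponential (exponential series in the algebra of matrices). -/
noncomputable def mexp {X : Type*} [Fintype X] [DecidableEq X] (M : Matrix X X ℂ) :
    Matrix X X ℂ :=
  NormedSpace.exp M

/-- The Keldysh covariance `C_{ρσ}(t,t')` of a dissipative system in the commuting case
`[A,B] = [B,Q] = 0`, with `f = (I + e^{−βQ − 2TB})⁻¹`. Here `true` encodes the branch `+`
and `false` encodes the branch `−`. -/
noncomputable def keldyshCovDiss {X : Type*} [Fintype X] [DecidableEq X]
    (β T : ℝ) (A B Q : Matrix X X ℂ) : Bool → Bool → ℝ → ℝ → Matrix X X ℂ :=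
  fun ρ σ t t' =>
  let f : Matrix X X ℂ := (1 + mexp ((-β : ℂ) • Q + ((-(2 * T) : ℝ) : ℂ) • B))⁻¹
  let E : ℝ → Matrix X X ℂ := fun s => mexp ((Complex.I * (s : ℂ)) • A)
  let G : ℝ → Matrix X X ℂ := fun s => mexp (((s : ℝ) : ℂ) • B)
  match ρ, σ with
  | false, true => E (-t) * f * E t' * G (-(2 * T) + t + t')
  | true, false => -(E (-t) * f * mexp ((-β : ℂ) • Q) * E t' * G (-(t + t')))
  | true, true =>
      (if t' ≤ t then (1 : ℂ) else 0) • (E (-t) * f * E t' * G (t' - t))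
        - (if t < t' then (1 : ℂ) else 0) •
          (E (-t) * f * mexp ((-β : ℂ) • Q) * E t' * G (t' - t - 2 * T))
  | false, false =>
      (if t ≤ t' then (1 : ℂ) else 0) • (E (-t) * f * E t' * G (t - t'))
        - (if t' < t then (1 : ℂ) else 0) •
          (E (-t) * f * mexp ((-β : ℂ) • Q) * E t' * G (t - t' - 2 * T))

/-!
Every block `C_{ρσ}(t,t')` is a product of the unitaries `e^{∓itA}`, the contraction `f`,
possibly `e^{-βQ}` (of norm at most `e^{-βq̃}`) and one `e^{sB}` with `s ≤ 0` (of norm at most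
`e^{sb̃}`), so its operator norm is bounded by an exponential in `t - t'` or `t + t'`, split in
two pieces at `t = t'` for the diagonal blocks. Entries of a matrix are bounded by its operator
norm, so row and column sums cost a factor `|X|`. Integrating the exponential majorant of a block
in one time over `[0,T]` gives at most `(1 + e^{-βq̃})(1 - e^{-Tb̃})/b̃`, and at the final time `T`
the majorant is at most `max 1 (e^{-βq̃} e^{-Tb̃})`.
-/

open Set

section CStarAlgebra

variable {A : Type*} [CStarAlgebra A] {a : A}

lemma IsSelfAdjoint.norm_exp_I_mul_smul_le (ha : IsSelfAdjoint a) (s : ℝ) :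
    ‖NormedSpace.exp ((Complex.I * s) • a)‖ ≤ 1 := by
  nontriviality A
  -- `exp_mem_unitary_of_mem_skewAdjoint` asks for a normed `ℚ`-algebra structure.
  let +nondep : NormedAlgebra ℚ A := .restrictScalars ℚ ℂ A
  have hskew : Complex.I * s ∈ skewAdjoint ℂ := by
    simp [skewAdjoint.mem_iff, Complex.conj_ofReal]
  exact (CStarRing.norm_of_mem_unitary
    (NormedSpace.exp_mem_unitary_of_mem_skewAdjoint (ha.smul_mem_skewAdjoint hskew))).le

lemma IsSelfAdjoint.norm_exp_smul_le (ha : IsSelfAdjoint a) {r c : ℝ} (hr : r ≤ 0)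
    (hc : ∀ x ∈ spectrum ℝ a, c ≤ x) : ‖NormedSpace.exp (r • a)‖ ≤ Real.exp (r * c) := by
  rw [← CFC.real_exp_eq_normedSpace_exp ((IsSelfAdjoint.all r).smul ha),
    ← cfc_comp_smul r Real.exp a]
  refine norm_cfc_le (Real.exp_pos _).le fun x hx => ?_
  rw [Real.norm_eq_abs, abs_of_pos (Real.exp_pos _), smul_eq_mul]
  exact Real.exp_le_exp.2 (mul_le_mul_of_nonpos_left (hc x hx) hr)

lemma IsSelfAdjoint.norm_inverse_one_add_exp_le (ha : IsSelfAdjoint a) :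
    ‖Ring.inverse (1 + NormedSpace.exp a)‖ ≤ 1 := by
  have h : 1 + NormedSpace.exp a = cfc (fun x : ℝ => 1 + Real.exp x) a := by
    rw [cfc_const_add 1 Real.exp a, CFC.real_exp_eq_normedSpace_exp ha, map_one]
  rw [h, ← cfc_inv _ a fun x _ => by positivity]
  refine norm_cfc_le zero_le_one fun x _ => ?_
  rw [Real.norm_eq_abs, abs_of_pos (by positivity)]
  exact inv_le_one_of_one_le₀ (by linarith [Real.exp_pos x])

end CStarAlgebra

open scoped Matrix.Norms.L2Operator

namespace Matrix

section Entries

variable {m n 𝕜 : Type*} [Fintype m] [Fintype n] [DecidableEq n] [RCLike 𝕜]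

lemma norm_entry_le_l2_opNorm (M : Matrix m n 𝕜) (i : m) (j : n) : ‖M i j‖ ≤ ‖M‖ := by
  have h := M.l2_opNorm_mulVec (EuclideanSpace.single j 1)
  rw [PiLp.norm_single, norm_one, mul_one] at h
  refine le_trans ?_ h
  simpa [mulVec_single] using PiLp.norm_apply_le (WithLp.toLp 2 (M *ᵥ Pi.single j 1)) i

lemma sum_norm_row_le_l2_opNorm (M : Matrix m n 𝕜) (i : m) :
    ∑ j, ‖M i j‖ ≤ Fintype.card n * ‖M‖ :=
  (Finset.sum_le_card_nsmul _ _ _ fun j _ => M.norm_entry_le_l2_opNorm i j).trans_eq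
    (by simp [nsmul_eq_mul])

lemma sum_norm_col_le_l2_opNorm (M : Matrix m n 𝕜) (j : n) :
    ∑ i, ‖M i j‖ ≤ Fintype.card m * ‖M‖ :=
  (Finset.sum_le_card_nsmul _ _ _ fun i _ => M.norm_entry_le_l2_opNorm i j).trans_eq
    (by simp [nsmul_eq_mul])

end Entries

namespace IsHermitian

variable {X : Type*} [Fintype X] [DecidableEq X] {H : Matrix X X ℂ}

lemma norm_mexp_real_smul_le (hH : H.IsHermitian) {r c : ℝ} (hr : r ≤ 0)
    (hc : ∀ i, c ≤ hH.eigenvalues i) : ‖mexp ((r : ℂ) • H)‖ ≤ Real.exp (r * c) := by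
  rw [mexp, Complex.coe_smul]
  refine hH.isSelfAdjoint.norm_exp_smul_le hr fun x hx => ?_
  rw [hH.spectrum_real_eq_range_eigenvalues] at hx
  obtain ⟨i, rfl⟩ := hx
  exact hc i

lemma norm_inv_one_add_mexp_le (hH : H.IsHermitian) : ‖(1 + mexp H)⁻¹‖ ≤ 1 := by
  rw [nonsing_inv_eq_ringInverse]
  exact hH.isSelfAdjoint.norm_inverse_one_add_exp_le

end IsHermitian

end Matrix

lemma exp_mul_sub_exp_mul_div_le {b p q T : ℝ} (hb : 0 < b) (hpq : p ≤ q) (hq : q ≤ 0)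
    (hqp : q - p ≤ T) :
    (Real.exp (q * b) - Real.exp (p * b)) / b ≤ (1 - Real.exp (-(T * b))) / b := by
  refine div_le_div_of_nonneg_right ?_ hb.le
  have h₁ : Real.exp (q * b) ≤ 1 := Real.exp_le_one_iff.2 (by nlinarith)
  have h₂ : Real.exp (-(T * b)) ≤ Real.exp ((p - q) * b) := Real.exp_le_exp.2 (by nlinarith)
  have h₃ : Real.exp (p * b) = Real.exp (q * b) * Real.exp ((p - q) * b) := by
    rw [← Real.exp_add]; ring_nf
  have h₄ : Real.exp ((p - q) * b) ≤ 1 := Real.exp_le_one_iff.2 (by nlinarith)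
  rw [h₃]
  nlinarith [mul_le_mul_of_nonneg_right h₁ (sub_nonneg.2 h₄)]

lemma integral_exp_sub_const_mul_le {b u v w T : ℝ} (hb : 0 < b) (huv : u ≤ v) (hvu : v - u ≤ T)
    (hvw : v ≤ w) : ∫ s in u..v, Real.exp ((s - w) * b) ≤ (1 - Real.exp (-(T * b))) / b := by
  have h := exp_mul_sub_exp_mul_div_le hb (p := u - w) (q := v - w) (T := T) (by linarith)
    (by linarith) (by linarith)
  simpa [intervalIntegral.integral_comp_sub_right (fun x => Real.exp (x * b)), hb.ne',
    integral_exp, div_eq_inv_mul] using h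

lemma integral_exp_const_sub_mul_le {b u v w T : ℝ} (hb : 0 < b) (huv : u ≤ v) (hvu : v - u ≤ T)
    (hwu : w ≤ u) : ∫ s in u..v, Real.exp ((w - s) * b) ≤ (1 - Real.exp (-(T * b))) / b := by
  have h := exp_mul_sub_exp_mul_div_le hb (p := w - v) (q := w - u) (T := T) (by linarith)
    (by linarith) (by linarith)
  simpa [intervalIntegral.integral_comp_sub_left (fun x => Real.exp (x * b)), hb.ne',
    integral_exp, div_eq_inv_mul] using h

lemma setIntegral_Icc_le_intervalIntegral {F g : ℝ → ℝ} {u v : ℝ} (huv : u ≤ v)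
    (hg : IntervalIntegrable g volume u v) (hF : ∀ s ∈ Icc u v, 0 ≤ F s)
    (hFg : ∀ᵐ s, s ∈ Ioo u v → F s ≤ g s) : ∫ s in Icc u v, F s ≤ ∫ s in u..v, g s := by
  rw [integral_Icc_eq_integral_Ioo, intervalIntegral.integral_of_le huv,
    integral_Ioc_eq_integral_Ioo]
  refine integral_mono_of_nonneg ?_ (hg.1.mono_set Ioo_subset_Ioc_self)
    ((ae_restrict_iff' measurableSet_Ioo).2 hFg)
  exact ae_restrict_of_forall_mem measurableSet_Ioo fun s hs => hF s (Ioo_subset_Icc_self hs)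

lemma setIntegral_Icc_le_intervalIntegral_add {F g₁ g₂ : ℝ → ℝ} {u c v : ℝ} (huc : u ≤ c)
    (hcv : c ≤ v) (hg₁ : IntervalIntegrable g₁ volume u c)
    (hg₂ : IntervalIntegrable g₂ volume c v) (hF : ∀ s ∈ Icc u v, 0 ≤ F s)
    (h₁ : ∀ s ∈ Ioo u c, F s ≤ g₁ s) (h₂ : ∀ s ∈ Ioo c v, F s ≤ g₂ s) :
    ∫ s in Icc u v, F s ≤ (∫ s in u..c, g₁ s) + ∫ s in c..v, g₂ s := by
  set G : ℝ → ℝ := fun s => if s ≤ c then g₁ s else g₂ s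
  have hG₁ : EqOn g₁ G (uIoc u c) := fun s hs => by
    rw [uIoc_of_le huc] at hs; exact (if_pos hs.2).symm
  have hG₂ : EqOn g₂ G (uIoc c v) := fun s hs => by
    rw [uIoc_of_le hcv] at hs; exact (if_neg (not_le.2 hs.1)).symm
  calc ∫ s in Icc u v, F s ≤ ∫ s in u..v, G s := by
        refine setIntegral_Icc_le_intervalIntegral (huc.trans hcv)
          ((hg₁.congr hG₁).trans (hg₂.congr hG₂)) hF ?_
        filter_upwards [(countable_singleton c).ae_notMem volume] with s hsc hs
        rcases lt_or_gt_of_ne (show s ≠ c from hsc) with hlt | hgt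
        · exact (h₁ s ⟨hs.1, hlt⟩).trans_eq (if_pos hlt.le).symm
        · exact (h₂ s ⟨hgt, hs.2⟩).trans_eq (if_neg (not_le.2 hgt)).symm
    _ = (∫ s in u..c, G s) + ∫ s in c..v, G s :=
        (intervalIntegral.integral_add_adjacent_intervals (hg₁.congr hG₁) (hg₂.congr hG₂)).symm
    _ = (∫ s in u..c, g₁ s) + ∫ s in c..v, g₂ s := by
        rw [intervalIntegral.integral_congr_ae (ae_of_all _ fun s hs => (hG₁ hs).symm),
          intervalIntegral.integral_congr_ae (ae_of_all _ fun s hs => (hG₂ hs).symm)]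

-- `b` and `e` stand for `b̃` and `e^{-βq̃}`.
def keldyshMajorant (b e T : ℝ) : Bool → Bool → ℝ → ℝ → ℝ
  | false, true, t, t' => Real.exp ((-(2 * T) + t + t') * b)
  | true, false, t, t' => e * Real.exp (-(t + t') * b)
  | true, true, t, t' =>
      if t' ≤ t then Real.exp ((t' - t) * b) else e * Real.exp ((t' - t - 2 * T) * b)
  | false, false, t, t' =>
      if t ≤ t' then Real.exp ((t - t') * b) else e * Real.exp ((t - t' - 2 * T) * b)

lemma keldyshMajorant_swap (b e T : ℝ) (ρ σ : Bool) (t t' : ℝ) :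
    keldyshMajorant b e T ρ σ t t' = keldyshMajorant b e T (!σ) (!ρ) t' t := by
  cases ρ <;> cases σ <;> simp only [keldyshMajorant, Bool.not_true, Bool.not_false] <;> ring_nf

section MajorantIntegrals

variable {b e T M t : ℝ} {F : ℝ → ℝ}

lemma setIntegral_le_of_le_keldyshMajorant_true_true (hb : 0 < b) (he : 0 ≤ e) (hM : 0 ≤ M)
    (ht : t ∈ Icc 0 T) (hF0 : ∀ s ∈ Icc 0 T, 0 ≤ F s)
    (hF : ∀ s ∈ Icc 0 T, F s ≤ M * keldyshMajorant b e T true true t s) :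
    ∫ s in Icc 0 T, F s ≤ M * ((1 - Real.exp (-(T * b))) / b)
      + M * e * ((1 - Real.exp (-(T * b))) / b) := by
  obtain ⟨ht0, htT⟩ := ht
  calc ∫ s in Icc 0 T, F s
      ≤ (∫ s in 0..t, M * Real.exp ((s - t) * b))
        + ∫ s in t..T, M * e * Real.exp ((s - (t + 2 * T)) * b) := by
        refine setIntegral_Icc_le_intervalIntegral_add ht0 htT
          (Continuous.intervalIntegrable (by fun_prop) _ _)
          (Continuous.intervalIntegrable (by fun_prop) _ _) hF0 (fun s hs => ?_) (fun s hs => ?_)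
        · refine (hF s ⟨hs.1.le, hs.2.le.trans htT⟩).trans_eq ?_
          rw [keldyshMajorant, if_pos hs.2.le]
        · refine (hF s ⟨ht0.trans hs.1.le, hs.2.le⟩).trans_eq ?_
          rw [keldyshMajorant, if_neg (not_le.2 hs.1)]; ring_nf
    _ ≤ _ := by
        simp only [intervalIntegral.integral_const_mul]
        gcongr
        · exact integral_exp_sub_const_mul_le hb ht0 (by linarith) le_rfl
        · exact integral_exp_sub_const_mul_le hb htT (by linarith) (by linarith)

lemma setIntegral_le_of_le_keldyshMajorant_false_false (hb : 0 < b) (he : 0 ≤ e) (hM : 0 ≤ M)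
    (ht : t ∈ Icc 0 T) (hF0 : ∀ s ∈ Icc 0 T, 0 ≤ F s)
    (hF : ∀ s ∈ Icc 0 T, F s ≤ M * keldyshMajorant b e T false false t s) :
    ∫ s in Icc 0 T, F s ≤ M * e * ((1 - Real.exp (-(T * b))) / b)
      + M * ((1 - Real.exp (-(T * b))) / b) := by
  obtain ⟨ht0, htT⟩ := ht
  calc ∫ s in Icc 0 T, F s
      ≤ (∫ s in 0..t, M * e * Real.exp ((t - 2 * T - s) * b))
        + ∫ s in t..T, M * Real.exp ((t - s) * b) := by
        refine setIntegral_Icc_le_intervalIntegral_add ht0 htT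
          (Continuous.intervalIntegrable (by fun_prop) _ _)
          (Continuous.intervalIntegrable (by fun_prop) _ _) hF0 (fun s hs => ?_) (fun s hs => ?_)
        · refine (hF s ⟨hs.1.le, hs.2.le.trans htT⟩).trans_eq ?_
          rw [keldyshMajorant, if_neg (not_le.2 hs.2)]; ring_nf
        · refine (hF s ⟨ht0.trans hs.1.le, hs.2.le⟩).trans_eq ?_
          rw [keldyshMajorant, if_pos hs.1.le]
    _ ≤ _ := by
        simp only [intervalIntegral.integral_const_mul]
        gcongr
        · exact integral_exp_const_sub_mul_le hb ht0 (by linarith) (by linarith)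
        · exact integral_exp_const_sub_mul_le hb htT (by linarith) le_rfl

lemma setIntegral_le_of_le_keldyshMajorant_false_true (hb : 0 < b) (hM : 0 ≤ M)
    (ht : t ∈ Icc 0 T) (hF0 : ∀ s ∈ Icc 0 T, 0 ≤ F s)
    (hF : ∀ s ∈ Icc 0 T, F s ≤ M * keldyshMajorant b e T false true t s) :
    ∫ s in Icc 0 T, F s ≤ M * ((1 - Real.exp (-(T * b))) / b) := by
  obtain ⟨ht0, htT⟩ := ht
  calc ∫ s in Icc 0 T, F s ≤ ∫ s in 0..T, M * Real.exp ((s - (2 * T - t)) * b) := by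
        refine setIntegral_Icc_le_intervalIntegral (ht0.trans htT)
          (Continuous.intervalIntegrable (by fun_prop) _ _) hF0 (ae_of_all _ fun s hs => ?_)
        exact (hF s (Ioo_subset_Icc_self hs)).trans_eq (by rw [keldyshMajorant]; ring_nf)
    _ ≤ _ := by
        rw [intervalIntegral.integral_const_mul]
        gcongr
        exact integral_exp_sub_const_mul_le hb (ht0.trans htT) (by linarith) (by linarith)

lemma setIntegral_le_of_le_keldyshMajorant_true_false (hb : 0 < b) (he : 0 ≤ e) (hM : 0 ≤ M)
    (ht : t ∈ Icc 0 T) (hF0 : ∀ s ∈ Icc 0 T, 0 ≤ F s)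
    (hF : ∀ s ∈ Icc 0 T, F s ≤ M * keldyshMajorant b e T true false t s) :
    ∫ s in Icc 0 T, F s ≤ M * e * ((1 - Real.exp (-(T * b))) / b) := by
  obtain ⟨ht0, htT⟩ := ht
  calc ∫ s in Icc 0 T, F s ≤ ∫ s in 0..T, M * e * Real.exp ((-t - s) * b) := by
        refine setIntegral_Icc_le_intervalIntegral (ht0.trans htT)
          (Continuous.intervalIntegrable (by fun_prop) _ _) hF0 (ae_of_all _ fun s hs => ?_)
        exact (hF s (Ioo_subset_Icc_self hs)).trans_eq (by rw [keldyshMajorant]; ring_nf)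
    _ ≤ _ := by
        rw [intervalIntegral.integral_const_mul]
        gcongr
        exact integral_exp_const_sub_mul_le hb (ht0.trans htT) (by linarith) (by linarith)

lemma setIntegral_le_of_le_keldyshMajorant (ρ σ : Bool) (hb : 0 < b) (he : 0 ≤ e) (hM : 0 ≤ M)
    (ht : t ∈ Icc 0 T) (hF0 : ∀ s ∈ Icc 0 T, 0 ≤ F s)
    (hF : ∀ s ∈ Icc 0 T, F s ≤ M * keldyshMajorant b e T ρ σ t s) :
    ∫ s in Icc 0 T, F s ≤ M * ((1 + e) * ((1 - Real.exp (-(T * b))) / b)) := by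
  have hK : 0 ≤ M * ((1 - Real.exp (-(T * b))) / b) := mul_nonneg hM <| div_nonneg
    (sub_nonneg.2 (Real.exp_le_one_iff.2 (neg_nonpos.2 (mul_nonneg (ht.1.trans ht.2) hb.le))))
    hb.le
  cases ρ <;> cases σ
  · linarith [setIntegral_le_of_le_keldyshMajorant_false_false hb he hM ht hF0 hF]
  · nlinarith [setIntegral_le_of_le_keldyshMajorant_false_true hb hM ht hF0 hF]
  · nlinarith [setIntegral_le_of_le_keldyshMajorant_true_false hb he hM ht hF0 hF]
  · linarith [setIntegral_le_of_le_keldyshMajorant_true_true hb he hM ht hF0 hF]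

end MajorantIntegrals

lemma keldyshMajorant_true_le_max {b e T : ℝ} (hb : 0 ≤ b) (he : 0 ≤ e) (σ : Bool) {t : ℝ}
    (ht : t ∈ Icc 0 T) : keldyshMajorant b e T true σ T t ≤ max 1 (e * Real.exp (-(T * b))) := by
  obtain ⟨ht0, htT⟩ := ht
  cases σ
  · refine le_max_of_le_right (mul_le_mul_of_nonneg_left (Real.exp_le_exp.2 ?_) he)
    nlinarith
  · rw [keldyshMajorant, if_pos htT]
    exact le_max_of_le_left (Real.exp_le_one_iff.2 (by nlinarith))

section KeldyshCovariance

variable {X : Type*} [Fintype X] [DecidableEq X] {β T qt bt : ℝ} {A B Q : Matrix X X ℂ}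

lemma norm_keldyshCovDiss_factors_le (hβ : 0 ≤ β) (hA : A.IsHermitian) (hQ : Q.IsHermitian)
    (hB : B.IsHermitian) (hqt : ∀ i, qt ≤ hQ.eigenvalues i) (hbt : ∀ i, bt ≤ hB.eigenvalues i)
    (a c s : ℝ) (hs : s ≤ 0) :
    ‖mexp ((Complex.I * (a : ℂ)) • A) * (1 + mexp ((-β : ℂ) • Q + ((-(2 * T) : ℝ) : ℂ) • B))⁻¹
        * mexp ((Complex.I * (c : ℂ)) • A) * mexp ((s : ℂ) • B)‖ ≤ Real.exp (s * bt) ∧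
    ‖mexp ((Complex.I * (a : ℂ)) • A) * (1 + mexp ((-β : ℂ) • Q + ((-(2 * T) : ℝ) : ℂ) • B))⁻¹
        * mexp ((-β : ℂ) • Q) * mexp ((Complex.I * (c : ℂ)) • A) * mexp ((s : ℂ) • B)‖
      ≤ Real.exp (-(β * qt)) * Real.exp (s * bt) := by
  have hE := hA.isSelfAdjoint.norm_exp_I_mul_smul_le
  have hG := hB.norm_mexp_real_smul_le hs hbt
  have hf : ‖(1 + mexp ((-β : ℂ) • Q + ((-(2 * T) : ℝ) : ℂ) • B))⁻¹‖ ≤ 1 := by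
    refine Matrix.IsHermitian.norm_inv_one_add_mexp_le ?_
    rw [← Complex.ofReal_neg, Complex.coe_smul, Complex.coe_smul]
    exact ((IsSelfAdjoint.all _).smul hQ.isSelfAdjoint).add
      ((IsSelfAdjoint.all _).smul hB.isSelfAdjoint)
  have heQ : ‖mexp ((-β : ℂ) • Q)‖ ≤ Real.exp (-(β * qt)) := by
    have h := hQ.norm_mexp_real_smul_le (neg_nonpos.2 hβ) hqt
    rwa [Complex.ofReal_neg, neg_mul] at h
  exact ⟨(norm_mul_le_of_le (norm_mul_le_of_le (norm_mul_le_of_le (hE a) hf) (hE c)) hG).trans_eq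
      (by ring),
    (norm_mul_le_of_le (norm_mul_le_of_le (norm_mul_le_of_le (norm_mul_le_of_le (hE a) hf) heQ)
      (hE c)) hG).trans_eq (by ring)⟩

lemma norm_keldyshCovDiss_le (hβ : 0 ≤ β) (hA : A.IsHermitian) (hQ : Q.IsHermitian)
    (hB : B.IsHermitian) (hqt : ∀ i, qt ≤ hQ.eigenvalues i) (hbt : ∀ i, bt ≤ hB.eigenvalues i)
    (ρ σ : Bool) {t t' : ℝ} (ht : t ∈ Icc 0 T) (ht' : t' ∈ Icc 0 T) :
    ‖keldyshCovDiss β T A B Q ρ σ t t'‖ ≤ keldyshMajorant bt (Real.exp (-(β * qt))) T ρ σ t t' := by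
  obtain ⟨ht0, htT⟩ := ht
  obtain ⟨ht'0, ht'T⟩ := ht'
  have hfac := norm_keldyshCovDiss_factors_le (T := T) hβ hA hQ hB hqt hbt (-t) t'
  cases ρ <;> cases σ <;> simp only [keldyshCovDiss, keldyshMajorant]
  · by_cases h : t ≤ t'
    · rw [if_pos h, if_neg (not_lt.2 h), if_pos h, one_smul, zero_smul, sub_zero]
      exact (hfac _ (by linarith)).1
    · rw [if_neg h, if_pos (lt_of_not_ge h), if_neg h, zero_smul, one_smul, zero_sub, norm_neg]
      exact (hfac _ (by linarith)).2
  · exact (hfac _ (by linarith)).1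
  · rw [norm_neg]
    exact (hfac _ (by linarith)).2
  · by_cases h : t' ≤ t
    · rw [if_pos h, if_neg (not_lt.2 h), if_pos h, one_smul, zero_smul, sub_zero]
      exact (hfac _ (by linarith)).1
    · rw [if_neg h, if_pos (lt_of_not_ge h), if_neg h, zero_smul, one_smul, zero_sub, norm_neg]
      exact (hfac _ (by linarith)).2

lemma setIntegral_sum_norm_keldyshCovDiss_row_le (hβ : 0 ≤ β) (hA : A.IsHermitian)
    (hQ : Q.IsHermitian) (hB : B.IsHermitian) (hqt : ∀ i, qt ≤ hQ.eigenvalues i)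
    (hbt : ∀ i, bt ≤ hB.eigenvalues i) (hbt0 : 0 < bt) (ρ σ : Bool) {t : ℝ} (ht : t ∈ Icc 0 T)
    (x : X) :
    ∫ s in Icc 0 T, ∑ y, ‖keldyshCovDiss β T A B Q ρ σ t s x y‖
      ≤ Fintype.card X * ((1 + Real.exp (-(β * qt))) * ((1 - Real.exp (-(T * bt))) / bt)) :=
  setIntegral_le_of_le_keldyshMajorant ρ σ hbt0 (Real.exp_pos _).le (Nat.cast_nonneg _) ht
    (fun _ _ => by positivity) fun s hs => (Matrix.sum_norm_row_le_l2_opNorm _ x).trans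
      (mul_le_mul_of_nonneg_left (norm_keldyshCovDiss_le hβ hA hQ hB hqt hbt ρ σ ht hs)
        (Nat.cast_nonneg _))

lemma setIntegral_sum_norm_keldyshCovDiss_col_le (hβ : 0 ≤ β) (hA : A.IsHermitian)
    (hQ : Q.IsHermitian) (hB : B.IsHermitian) (hqt : ∀ i, qt ≤ hQ.eigenvalues i)
    (hbt : ∀ i, bt ≤ hB.eigenvalues i) (hbt0 : 0 < bt) (ρ σ : Bool) {t' : ℝ}
    (ht' : t' ∈ Icc 0 T) (y : X) :
    ∫ s in Icc 0 T, ∑ x, ‖keldyshCovDiss β T A B Q ρ σ s t' x y‖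
      ≤ Fintype.card X * ((1 + Real.exp (-(β * qt))) * ((1 - Real.exp (-(T * bt))) / bt)) :=
  setIntegral_le_of_le_keldyshMajorant (!σ) (!ρ) hbt0 (Real.exp_pos _).le (Nat.cast_nonneg _) ht'
    (fun _ _ => by positivity) fun s hs => (Matrix.sum_norm_col_le_l2_opNorm _ y).trans
      ((mul_le_mul_of_nonneg_left (norm_keldyshCovDiss_le hβ hA hQ hB hqt hbt ρ σ hs ht')
        (Nat.cast_nonneg _)).trans_eq (by rw [keldyshMajorant_swap]))

end KeldyshCovariance

theorem decay_constant_bounds_keldyshCovDiss_general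
    {X : Type*} [Fintype X] [DecidableEq X] [Nonempty X]
    (β T : ℝ) (hβ : 0 < β)
    (A B Q : Matrix X X ℂ) (hA : A.IsHermitian) (hQ : Q.IsHermitian) (hB : B.PosDef) :
    ∀ qt bt : ℝ, qt = ⨅ ℓ, hQ.eigenvalues ℓ → bt = ⨅ ℓ, hB.1.eigenvalues ℓ →
      ((∀ ρ : Bool, ∀ t ∈ Set.Icc (0 : ℝ) T, ∀ x : X,
        (∑ σ : Bool, ∫ t' in Set.Icc (0 : ℝ) T,
            ∑ y : X, ‖(keldyshCovDiss β T A B Q ρ σ t t') x y‖)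
          ≤ 2 * (Fintype.card X : ℝ) * (1 + Real.exp (-(β * qt))) * (1 / bt) *
              (1 - Real.exp (-(T * bt)))) ∧
      (∀ σ : Bool, ∀ t' ∈ Set.Icc (0 : ℝ) T, ∀ y : X,
        (∑ ρ : Bool, ∫ t in Set.Icc (0 : ℝ) T,
            ∑ x : X, ‖(keldyshCovDiss β T A B Q ρ σ t t') x y‖)
          ≤ 2 * (Fintype.card X : ℝ) * (1 + Real.exp (-(β * qt))) * (1 / bt) *
              (1 - Real.exp (-(T * bt))))) ∧
      ((∀ σ : Bool, ∀ t' ∈ Set.Icc (0 : ℝ) T, ∀ y : X,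
        (∑ x : X, ‖(keldyshCovDiss β T A B Q true σ T t') x y‖)
          ≤ (Fintype.card X : ℝ) * max 1 (Real.exp (-(β * qt)) * Real.exp (-(T * bt)))) ∧
      (∀ ρ : Bool, ∀ t ∈ Set.Icc (0 : ℝ) T, ∀ x : X,
        (∑ y : X, ‖(keldyshCovDiss β T A B Q ρ false t T) x y‖)
          ≤ (Fintype.card X : ℝ) * max 1 (Real.exp (-(β * qt)) * Real.exp (-(T * bt))))) := by
  intro qt bt hqt hbt
  have hqt' : ∀ i, qt ≤ hQ.eigenvalues i := hqt ▸ ciInf_le (Set.finite_range _).bddBelow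
  have hbt' : ∀ i, bt ≤ hB.1.eigenvalues i := hbt ▸ ciInf_le (Set.finite_range _).bddBelow
  have hbt0 : 0 < bt := by
    obtain ⟨i, hi⟩ := exists_eq_ciInf_of_finite (f := hB.1.eigenvalues)
    exact hbt ▸ hi ▸ hB.eigenvalues_pos i
  have hC := norm_keldyshCovDiss_le (T := T) hβ.le hA hQ hB.1 hqt' hbt'
  have hmax := keldyshMajorant_true_le_max (T := T) hbt0.le (Real.exp_pos (-(β * qt))).le
  have hsum : 2 * (Fintype.card X : ℝ) * (1 + Real.exp (-(β * qt))) * (1 / bt) *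
      (1 - Real.exp (-(T * bt))) = ∑ _ : Bool,
        Fintype.card X * ((1 + Real.exp (-(β * qt))) * ((1 - Real.exp (-(T * bt))) / bt)) := by
    rw [Fintype.sum_bool]; ring
  refine ⟨⟨fun ρ t ht x => ?_, fun σ t' ht' y => ?_⟩, fun σ t' ht' y => ?_, fun ρ t ht x => ?_⟩
  · exact hsum ▸ Finset.sum_le_sum fun σ _ =>
      setIntegral_sum_norm_keldyshCovDiss_row_le hβ.le hA hQ hB.1 hqt' hbt' hbt0 ρ σ ht x
  · exact hsum ▸ Finset.sum_le_sum fun ρ _ =>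
      setIntegral_sum_norm_keldyshCovDiss_col_le hβ.le hA hQ hB.1 hqt' hbt' hbt0 ρ σ ht' y
  · refine (Matrix.sum_norm_col_le_l2_opNorm _ y).trans
      (mul_le_mul_of_nonneg_left ?_ (by positivity))
    exact (hC true σ ⟨ht'.1.trans ht'.2, le_rfl⟩ ht').trans (hmax σ ht')
  · refine (Matrix.sum_norm_row_le_l2_opNorm _ x).trans
      (mul_le_mul_of_nonneg_left ?_ (by positivity))
    exact (hC ρ false ht ⟨ht.1.trans ht.2, le_rfl⟩).trans
      ((keldyshMajorant_swap _ _ _ _ _ _ _).trans_le (hmax (!ρ) ht))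

/-- Bounds on the decay constant `α_C` and the modified decay constant `α̃_C` of the Keldysh
covariance of a dissipative system (`[A,B] = [A,Q] = [B,Q] = 0`, `B > 0`):
`α_C ≤ 2|X|(1+e^{−βq̃})(1/b̃)(1−e^{−Tb̃})` and `α̃_C ≤ |X| max{1, e^{−βq̃}e^{−Tb̃}}`,
where `q̃, b̃` are the smallest eigenvalues of `Q, B`. The bound on each supremum is
expressed pointwise; `true` encodes the branch `+`, `false` encodes `−`. -/
theorem decay_constant_bounds_keldyshCovDiss
    {X : Type*} [Fintype X] [DecidableEq X] [Nonempty X]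
    (β T : ℝ) (hβ : 0 < β) (hT : 0 < T)
    (A B Q : Matrix X X ℂ) (hA : A.IsHermitian) (hQ : Q.IsHermitian) (hB : B.PosDef)
    (hAB : Commute A B) (hAQ : Commute A Q) (hBQ : Commute B Q) :
    ∀ qt bt : ℝ, qt = ⨅ ℓ, hQ.eigenvalues ℓ → bt = ⨅ ℓ, hB.1.eigenvalues ℓ →
      ((∀ ρ : Bool, ∀ t ∈ Set.Icc (0 : ℝ) T, ∀ x : X,
        (∑ σ : Bool, ∫ t' in Set.Icc (0 : ℝ) T,
            ∑ y : X, ‖(keldyshCovDiss β T A B Q ρ σ t t') x y‖)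
          ≤ 2 * (Fintype.card X : ℝ) * (1 + Real.exp (-(β * qt))) * (1 / bt) *
              (1 - Real.exp (-(T * bt)))) ∧
      (∀ σ : Bool, ∀ t' ∈ Set.Icc (0 : ℝ) T, ∀ y : X,
        (∑ ρ : Bool, ∫ t in Set.Icc (0 : ℝ) T,
            ∑ x : X, ‖(keldyshCovDiss β T A B Q ρ σ t t') x y‖)
          ≤ 2 * (Fintype.card X : ℝ) * (1 + Real.exp (-(β * qt))) * (1 / bt) *
              (1 - Real.exp (-(T * bt))))) ∧
      ((∀ σ : Bool, ∀ t' ∈ Set.Icc (0 : ℝ) T, ∀ y : X,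
        (∑ x : X, ‖(keldyshCovDiss β T A B Q true σ T t') x y‖)
          ≤ (Fintype.card X : ℝ) * max 1 (Real.exp (-(β * qt)) * Real.exp (-(T * bt)))) ∧
      (∀ ρ : Bool, ∀ t ∈ Set.Icc (0 : ℝ) T, ∀ x : X,
        (∑ y : X, ‖(keldyshCovDiss β T A B Q ρ false t T) x y‖)
          ≤ (Fintype.card X : ℝ) * max 1 (Real.exp (-(β * qt)) * Real.exp (-(T * bt))))) :=
  decay_constant_bounds_keldyshCovDiss_general β T hβ A B Q hA hQ hB
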